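/- Let B₁ ⊆ BVal(Σ₁) and B₂ ⊆ BVal(Σ₂) be closed under substitutions. The combination of the single-conclusion logics ⊢_{B₁} and ⊢_{B₂} equals ⊢ over Σ₁ ∪ Σ₂ characterized by (B₁^{Σ₁∪Σ₂})^∩ ∩ (B₂^{Σ₁∪Σ₂})^∩, the intersection of the meet-closures of the extensions of B₁ and B₂ to the combined signature. -/
import Mathlib


set_option autoImplicit false

namespace Paper

/-- Formulas over a signature: `C` is a universe of connective symbols with
arities `ar`, and a signature is a set `S` of connectives.  Variables are
indexed by `ℕ` (a countably infinite set). -/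
inductive Fm (C : Type) (ar : C → ℕ) (S : Set C) : Type
  | var : ℕ → Fm C ar S
  | app : (c : C) → c ∈ S → (Fin (ar c) → Fm C ar S) → Fm C ar S

variable {C : Type} {ar : C → ℕ}

/-- Application of a substitution. -/
def subst {S : Set C} (σ : ℕ → Fm C ar S) : Fm C ar S → Fm C ar S
  | .var n => σ n
  | .app c h args => .app c h (fun i => subst σ (args i))

/-- Embedding of formulas along a signature inclusion. -/
def emb {S0 S : Set C} (hS : S0 ⊆ S) : Fm C ar S0 → Fm C ar S
  | .var n => .var n
  | .app c h args => .app c (hS h) (fun i => emb hS (args i))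

theorem unionLeft {S1 S2 : Set C} : S1 ⊆ S1 ∪ S2 := Set.subset_union_left
theorem unionRight {S1 S2 : Set C} : S2 ⊆ S1 ∪ S2 := Set.subset_union_right

/-- Single-conclusion (Tarskian) consequence relation: reflexivity,
monotonicity, transitivity (cut) and substitution invariance. -/
def IsSC {S : Set C} (L : Set (Fm C ar S) → Fm C ar S → Prop) : Prop :=
  (∀ Γ A, A ∈ Γ → L Γ A) ∧
  (∀ Γ Γ' A, Γ ⊆ Γ' → L Γ A → L Γ' A) ∧
  (∀ Γ Δ A, (∀ B ∈ Δ, L Γ B) → L (Γ ∪ Δ) A → L Γ A) ∧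
  (∀ σ Γ A, L Γ A → L (subst σ '' Γ) (subst σ A))

/-- Compactness of a single-conclusion relation. -/
def CompactSC {S : Set C} (L : Set (Fm C ar S) → Fm C ar S → Prop) : Prop :=
  ∀ Γ A, L Γ A → ∃ Γ0, Γ0 ⊆ Γ ∧ Γ0.Finite ∧ L Γ0 A

/-- Image of a single-conclusion relation along a signature inclusion. -/
def embRelSC {S0 S : Set C} (hS : S0 ⊆ S)
    (L : Set (Fm C ar S0) → Fm C ar S0 → Prop) :
    Set (Fm C ar S) → Fm C ar S → Prop :=
  fun Γ A => ∃ Γ0 A0, L Γ0 A0 ∧ Γ = emb hS '' Γ0 ∧ A = emb hS A0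

/-- `L` is the least single-conclusion logic containing `Base`. -/
def LeastSC {S : Set C} (Base L : Set (Fm C ar S) → Fm C ar S → Prop) : Prop :=
  IsSC L ∧ (∀ Γ A, Base Γ A → L Γ A) ∧
  (∀ L', IsSC L' → (∀ Γ A, Base Γ A → L' Γ A) → ∀ Γ A, L Γ A → L' Γ A)

/-- `L` is the combination (fibring) of the single-conclusion logics
`L1`, `L2`: the least single-conclusion logic over `S1 ∪ S2` extending both. -/
def IsCombSC {S1 S2 : Set C}
    (L1 : Set (Fm C ar S1) → Fm C ar S1 → Prop)
    (L2 : Set (Fm C ar S2) → Fm C ar S2 → Prop)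
    (L : Set (Fm C ar (S1 ∪ S2)) → Fm C ar (S1 ∪ S2) → Prop) : Prop :=
  LeastSC (fun Γ A => embRelSC unionLeft L1 Γ A ∨ embRelSC unionRight L2 Γ A) L

/-- Multiple-conclusion consequence relation: overlap, dilution,
cut for sets, substitution invariance. -/
def IsMC {S : Set C} (Cn : Set (Fm C ar S) → Set (Fm C ar S) → Prop) : Prop :=
  (∀ Γ Δ, (Γ ∩ Δ).Nonempty → Cn Γ Δ) ∧
  (∀ Γ Δ Γ' Δ', Cn Γ Δ → Cn (Γ ∪ Γ') (Δ ∪ Δ')) ∧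
  (∀ Γ Δ (Ω : Set (Fm C ar S)),
    (∀ Ω1 Ω2, Ω1 ∪ Ω2 = Ω → Ω1 ∩ Ω2 = ∅ → Cn (Γ ∪ Ω1) (Ω2 ∪ Δ)) → Cn Γ Δ) ∧
  (∀ σ Γ Δ, Cn Γ Δ → Cn (subst σ '' Γ) (subst σ '' Δ))

def embRelMC {S0 S : Set C} (hS : S0 ⊆ S)
    (Cn : Set (Fm C ar S0) → Set (Fm C ar S0) → Prop) :
    Set (Fm C ar S) → Set (Fm C ar S) → Prop :=
  fun Γ Δ => ∃ Γ0 Δ0, Cn Γ0 Δ0 ∧ Γ = emb hS '' Γ0 ∧ Δ = emb hS '' Δ0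

def LeastMC {S : Set C} (Base Cn : Set (Fm C ar S) → Set (Fm C ar S) → Prop) : Prop :=
  IsMC Cn ∧ (∀ Γ Δ, Base Γ Δ → Cn Γ Δ) ∧
  (∀ Cn', IsMC Cn' → (∀ Γ Δ, Base Γ Δ → Cn' Γ Δ) → ∀ Γ Δ, Cn Γ Δ → Cn' Γ Δ)

def IsCombMC {S1 S2 : Set C}
    (C1 : Set (Fm C ar S1) → Set (Fm C ar S1) → Prop)
    (C2 : Set (Fm C ar S2) → Set (Fm C ar S2) → Prop)
    (Cn : Set (Fm C ar (S1 ∪ S2)) → Set (Fm C ar (S1 ∪ S2)) → Prop) : Prop :=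
  LeastMC (fun Γ Δ => embRelMC unionLeft C1 Γ Δ ∨ embRelMC unionRight C2 Γ Δ) Cn

/-- Multiple-conclusion relation determined by a set of bivaluations. -/
def mcBiv {S : Set C} (B : Set (Fm C ar S → Prop)) :
    Set (Fm C ar S) → Set (Fm C ar S) → Prop :=
  fun Γ Δ => ∀ b ∈ B, (∃ A ∈ Γ, ¬ b A) ∨ (∃ A ∈ Δ, b A)

/-- Single-conclusion relation determined by a set of bivaluations. -/
def scBiv {S : Set C} (B : Set (Fm C ar S → Prop)) :
    Set (Fm C ar S) → Fm C ar S → Prop :=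
  fun Γ A => ∀ b ∈ B, (∀ B' ∈ Γ, b B') → b A

/-- A set of bivaluations is closed under substitutions. -/
def SubstClosed {S : Set C} (B : Set (Fm C ar S → Prop)) : Prop :=
  ∀ b ∈ B, ∀ σ : ℕ → Fm C ar S, (fun A => b (subst σ A)) ∈ B

/-- Meet-closure of a set of bivaluations. -/
def meetCl {S : Set C} (B : Set (Fm C ar S → Prop)) : Set (Fm C ar S → Prop) :=
  {b | ∃ X, X ⊆ B ∧ b = fun A => ∀ b' ∈ X, b' A}

/-- A skeleton bijection for a signature inclusion `S0 ⊆ S`: it commutes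
with `S0`-connectives and it maps variables and monoliths to variables. -/
structure Skel (ar : C → ℕ) {S0 S : Set C} (hS : S0 ⊆ S) where
  toFun : Fm C ar S → Fm C ar S0
  bij : Function.Bijective toFun
  comm : ∀ (c : C) (hc : c ∈ S0) (args : Fin (ar c) → Fm C ar S),
    toFun (.app c (hS hc) args) = .app c hc (fun i => toFun (args i))
  mono : ∀ (c : C) (hc : c ∈ S) (args : Fin (ar c) → Fm C ar S),
    c ∉ S0 → ∃ n, toFun (.app c hc args) = .var n
  var : ∀ n : ℕ, ∃ m : ℕ, toFun (.var n) = .var m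

/-- Extension of a set of bivaluations along the skeleton map. -/
def extBiv {S0 S : Set C} {hS : S0 ⊆ S} (sk : Skel ar hS)
    (B : Set (Fm C ar S0 → Prop)) : Set (Fm C ar S → Prop) :=
  {b | ∃ b0 ∈ B, b = fun A => b0 (sk.toFun A)}

/-- Partial non-deterministic matrices (PNmatrices). -/
structure PN (C : Type) (ar : C → ℕ) (S : Set C) where
  V : Type
  D : Set V
  tbl : ∀ c : C, c ∈ S → (Fin (ar c) → V) → Set V

/-- Valuations of a PNmatrix. -/
def IsVal {S : Set C} (M : PN C ar S) (v : Fm C ar S → M.V) : Prop :=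
  ∀ (c : C) (h : c ∈ S) (args : Fin (ar c) → Fm C ar S),
    v (.app c h args) ∈ M.tbl c h (fun i => v (args i))

/-- Bivaluations induced by a PNmatrix. -/
def BVal {S : Set C} (M : PN C ar S) : Set (Fm C ar S → Prop) :=
  {b | ∃ v, IsVal M v ∧ b = fun A => v A ∈ M.D}

def scPN {S : Set C} (M : PN C ar S) : Set (Fm C ar S) → Fm C ar S → Prop :=
  scBiv (BVal M)

def mcPN {S : Set C} (M : PN C ar S) : Set (Fm C ar S) → Set (Fm C ar S) → Prop :=
  mcBiv (BVal M)

/-- Extension of a PNmatrix to a larger signature: new connectives are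
interpreted fully non-deterministically. -/
def extPN {S0 S : Set C} (hS : S0 ⊆ S) (M : PN C ar S0) : PN C ar S where
  V := M.V
  D := M.D
  tbl c _ args := {y | ∀ hc : c ∈ S0, y ∈ M.tbl c hc args}

/-- Strict product of two PNmatrices. -/
def sprod {S1 S2 : Set C} (M1 : PN C ar S1) (M2 : PN C ar S2) :
    PN C ar (S1 ∪ S2) where
  V := {p : M1.V × M2.V // p.1 ∈ M1.D ↔ p.2 ∈ M2.D}
  D := {p | p.val.1 ∈ M1.D ∧ p.val.2 ∈ M2.D}
  tbl c _ args :=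
    {p | (∀ hc : c ∈ S1, p.val.1 ∈ M1.tbl c hc (fun i => (args i).val.1)) ∧
         (∀ hc : c ∈ S2, p.val.2 ∈ M2.tbl c hc (fun i => (args i).val.2))}

/-- Theories of a single-conclusion relation. -/
def IsTheorySC {S : Set C} (L : Set (Fm C ar S) → Fm C ar S → Prop)
    (Γ : Set (Fm C ar S)) : Prop :=
  ∀ A, L Γ A → A ∈ Γ

/-- A PNmatrix is saturated if every consistent theory of its
single-conclusion logic is the set of designated formulas of a valuation. -/
def Saturated {S : Set C} (M : PN C ar S) : Prop :=
  ∀ Γ : Set (Fm C ar S), IsTheorySC (scPN M) Γ → Γ ≠ Set.univ →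
    ∃ v, IsVal M v ∧ Γ = {A | v A ∈ M.D}

/-- The ω-power of a PNmatrix. -/
def omegaPow {S : Set C} (M : PN C ar S) : PN C ar S where
  V := ℕ → M.V
  D := {x | ∀ i, x i ∈ M.D}
  tbl c h args := {y | ∀ i, y i ∈ M.tbl c h (fun k => args k i)}

/-- Strict homomorphisms of PNmatrices (rexpansions). -/
def IsHom {S0 S : Set C} (hS : S0 ⊆ S) (M : PN C ar S) (M0 : PN C ar S0)
    (h : M.V → M0.V) : Prop :=
  (∀ x, h x ∈ M0.D ↔ x ∈ M.D) ∧
  (∀ (c : C) (hc : c ∈ S0) (args : Fin (ar c) → M.V) (y : M.V),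
    y ∈ M.tbl c (hS hc) args → h y ∈ M0.tbl c hc (fun i => h (args i)))

/-- Sum of a family of PNmatrices over a common signature. -/
def psum {S : Set C} {I : Type} (Ms : I → PN C ar S) : PN C ar S where
  V := (i : I) × (Ms i).V
  D := {p | p.2 ∈ (Ms p.1).D}
  tbl c h args :=
    {p | ∃ xs : Fin (ar c) → (Ms p.1).V,
      (∀ k, args k = ⟨p.1, xs k⟩) ∧ p.2 ∈ (Ms p.1).tbl c h xs}

/-- Lindenbaum matrix with designated set `Γ`. -/
def lind {S : Set C} (Γ : Set (Fm C ar S)) : PN C ar S where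
  V := Fm C ar S
  D := Γ
  tbl c h args := {Fm.app c h args}

/-- Reduct of a PNmatrix to a subsignature. -/
def reduct {S0 S : Set C} (hS : S0 ⊆ S) (M : PN C ar S) : PN C ar S0 where
  V := M.V
  D := M.D
  tbl c hc := M.tbl c (hS hc)

/-- One-variable formulas (only the variable `0` occurs). -/
inductive OnlyVar0 {C : Type} {ar : C → ℕ} {S : Set C} : Fm C ar S → Prop
  | var : OnlyVar0 (.var 0)
  | app (c : C) (h : c ∈ S) (args : Fin (ar c) → Fm C ar S) :
      (∀ i, OnlyVar0 (args i)) → OnlyVar0 (.app c h args)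

/-- `S_M(x)`: values of a one-variable `S0`-formula over valuations
of `M` sending the variable to `x`. -/
def SMset {S0 S : Set C} (hS : S0 ⊆ S) (M : PN C ar S)
    (s : Fm C ar S0) (x : M.V) : Set M.V :=
  {w | ∃ v, IsVal M v ∧ v (.var 0) = x ∧ w = v (emb hS s)}

/-- `M` is `S0`-monadic. -/
def Monadic {S0 S : Set C} (hS : S0 ⊆ S) (M : PN C ar S) : Prop :=
  ∀ x y : M.V, x ≠ y → ∃ s : Fm C ar S0, OnlyVar0 s ∧
    (SMset hS M s x).Nonempty ∧ (SMset hS M s y).Nonempty ∧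
    ((SMset hS M s x ⊆ M.D ∧ SMset hS M s y ∩ M.D = ∅) ∨
     (SMset hS M s y ⊆ M.D ∧ SMset hS M s x ∩ M.D = ∅))

/-- Strict product of a PNmatrix over `S0 ⊆ S` with one over `S`
(the union of the signatures being `S`). -/
def sprodL {S0 S : Set C} (hS : S0 ⊆ S) (M1 : PN C ar S0) (M2 : PN C ar S) :
    PN C ar S where
  V := {p : M1.V × M2.V // p.1 ∈ M1.D ↔ p.2 ∈ M2.D}
  D := {p | p.val.1 ∈ M1.D ∧ p.val.2 ∈ M2.D}
  tbl c h args :=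
    {p | (∀ hc : c ∈ S0, p.val.1 ∈ M1.tbl c hc (fun i => (args i).val.1)) ∧
         p.val.2 ∈ M2.tbl c h (fun i => (args i).val.2)}

/-- All substitution instances (over `S1 ∪ S2`) of axiom schemata `Ax ⊆ Fm_{S2}`. -/
def axInst {S1 S2 : Set C} (Ax : Set (Fm C ar S2)) : Set (Fm C ar (S1 ∪ S2)) :=
  {B | ∃ A ∈ Ax, ∃ σ, B = subst σ (emb unionRight A)}

/-- The Nmatrix `M_Ax` associated to a set of axiom schemata. -/
def MAx (S1 : Set C) {S2 : Set C} (Ax : Set (Fm C ar S2)) : PN C ar (S1 ∪ S2) where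
  V := {p : Fm C ar (S1 ∪ S2) × Bool // p.1 ∈ axInst (S1 := S1) Ax → p.2 = true}
  D := {p | p.val.2 = true}
  tbl c h args := {p | p.val.1 = Fm.app c h (fun i => (args i).val.1)}


section Aux

variable {S0 S : Set C} {hS : S0 ⊆ S}

instance {S' : Set C} : Nonempty (Fm C ar S') := ⟨.var 0⟩

/-- Inverse of the skeleton bijection. -/
noncomputable def skInv (sk : Skel ar hS) : Fm C ar S0 → Fm C ar S :=
  Function.invFun sk.toFun

lemma skInv_left (sk : Skel ar hS) : ∀ A, skInv sk (sk.toFun A) = A :=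
  Function.leftInverse_invFun sk.bij.1

lemma skInv_right (sk : Skel ar hS) : ∀ G, sk.toFun (skInv sk G) = G :=
  Function.rightInverse_invFun sk.bij.2

/-- The skeleton commutes with substitutions, up to translating the
substitution along the skeleton. -/
lemma skel_subst (sk : Skel ar hS) (σ : ℕ → Fm C ar S) (A : Fm C ar S) :
    sk.toFun (subst σ A) =
      subst (fun n => sk.toFun (subst σ (skInv sk (.var n)))) (sk.toFun A) := by
  induction A with
  | var n =>
      obtain ⟨m, hm⟩ := sk.var n
      rw [hm]
      show sk.toFun (subst σ (.var n)) = sk.toFun (subst σ (skInv sk (.var m)))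
      rw [← hm, skInv_left]
  | app c h args ih =>
      by_cases hc : c ∈ S0
      · calc sk.toFun (subst σ (.app c h args))
            = sk.toFun (.app c (hS hc) (fun i => subst σ (args i))) := rfl
          _ = .app c hc (fun i => sk.toFun (subst σ (args i))) := sk.comm c hc _
          _ = .app c hc (fun i =>
                subst (fun n => sk.toFun (subst σ (skInv sk (.var n))))
                  (sk.toFun (args i))) := by
              exact congrArg _ (funext fun i => ih i)
          _ = subst (fun n => sk.toFun (subst σ (skInv sk (.var n))))
                (.app c hc (fun i => sk.toFun (args i))) := rfl
          _ = subst (fun n => sk.toFun (subst σ (skInv sk (.var n))))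
                (sk.toFun (.app c (hS hc) args)) := by rw [sk.comm c hc args]
          _ = subst (fun n => sk.toFun (subst σ (skInv sk (.var n))))
                (sk.toFun (.app c h args)) := rfl
      · obtain ⟨n, hn⟩ := sk.mono c h args hc
        rw [hn]
        show sk.toFun (subst σ (.app c h args))
          = sk.toFun (subst σ (skInv sk (.var n)))
        rw [← hn, skInv_left]

/-- The skeleton composed with the embedding is a substitution. -/
lemma skel_emb (sk : Skel ar hS) (G : Fm C ar S0) :
    sk.toFun (emb hS G) = subst (fun n => sk.toFun (.var n)) G := by
  induction G with
  | var n => rfl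
  | app c hc args ih =>
      calc sk.toFun (emb hS (.app c hc args))
          = sk.toFun (.app c (hS hc) (fun i => emb hS (args i))) := rfl
        _ = .app c hc (fun i => sk.toFun (emb hS (args i))) := sk.comm c hc _
        _ = .app c hc (fun i => subst (fun n => sk.toFun (.var n)) (args i)) := by
            exact congrArg _ (funext fun i => ih i)
        _ = subst (fun n => sk.toFun (.var n)) (.app c hc args) := rfl

/-- Substituting along the inverse skeleton undoes the embedding, up to the
inverse skeleton. -/
lemma subst_skInv_emb (sk : Skel ar hS) (G : Fm C ar S0) :
    subst (fun n => skInv sk (.var n)) (emb hS G) = skInv sk G := by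
  induction G with
  | var n => rfl
  | app c hc args ih =>
      apply sk.bij.1
      rw [skInv_right]
      calc sk.toFun (subst (fun n => skInv sk (.var n)) (emb hS (.app c hc args)))
          = sk.toFun (.app c (hS hc)
              (fun i => subst (fun n => skInv sk (.var n)) (emb hS (args i)))) := rfl
        _ = .app c hc (fun i =>
              sk.toFun (subst (fun n => skInv sk (.var n)) (emb hS (args i)))) :=
            sk.comm c hc _
        _ = .app c hc (fun i => sk.toFun (skInv sk (args i))) := by
            exact congrArg _ (funext fun i => by rw [ih i])
        _ = .app c hc args := by
            exact congrArg _ (funext fun i => skInv_right sk (args i))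

lemma substClosed_extBiv (sk : Skel ar hS) (B : Set (Fm C ar S0 → Prop))
    (hB : SubstClosed B) : SubstClosed (extBiv sk B) := by
  rintro b ⟨b0, hb0, rfl⟩ σ
  refine ⟨fun G => b0 (subst (fun n => sk.toFun (subst σ (skInv sk (.var n)))) G),
    hB b0 hb0 _, ?_⟩
  funext A
  show b0 (sk.toFun (subst σ A)) = _
  rw [skel_subst sk σ A]

lemma substClosed_meetCl (B' : Set (Fm C ar S → Prop)) (hB : SubstClosed B') :
    SubstClosed (meetCl B') := by
  rintro b ⟨X, hX, rfl⟩ σ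
  refine ⟨(fun b' => fun A => b' (subst σ A)) '' X, ?_, ?_⟩
  · rintro _ ⟨b', hb', rfl⟩; exact hB b' (hX hb') σ
  · funext A; apply propext
    constructor
    · rintro h _ ⟨b', hb', rfl⟩; exact h b' hb'
    · intro h b' hb'; exact h _ ⟨b', hb', rfl⟩

lemma isSC_scBiv (B : Set (Fm C ar S → Prop)) (hB : SubstClosed B) :
    IsSC (scBiv B) := by
  refine ⟨?_, ?_, ?_, ?_⟩
  · intro Γ A hA b _ hΓ; exact hΓ A hA
  · intro Γ Γ' A hsub h b hb hΓ; exact h b hb fun B' hB' => hΓ B' (hsub hB')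
  · intro Γ Δ A hΔ h b hb hΓ
    exact h b hb fun B' hB' => hB'.elim (hΓ B') fun hd => hΔ B' hd b hb hΓ
  · intro σ Γ A h b hb hΓ
    exact h _ (hB b hb σ) fun B' hB' => hΓ _ ⟨B', hB', rfl⟩

lemma base_sub (sk : Skel ar hS) (B : Set (Fm C ar S0 → Prop))
    (hB : SubstClosed B) (Γ0 : Set (Fm C ar S0)) (A0 : Fm C ar S0)
    (h : scBiv B Γ0 A0) (b : Fm C ar S → Prop) (hb : b ∈ meetCl (extBiv sk B))
    (hΓ : ∀ G ∈ emb hS '' Γ0, b G) : b (emb hS A0) := by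
  obtain ⟨X, hX, rfl⟩ := hb
  intro b' hb'
  obtain ⟨b0, hb0, rfl⟩ := hX hb'
  have key := h (fun G => b0 (subst (fun n => sk.toFun (.var n)) G)) (hB b0 hb0 _)
    (fun G hG => by
      have h1 : b0 (sk.toFun (emb hS G)) := hΓ (emb hS G) ⟨G, hG, rfl⟩ _ hb'
      rwa [skel_emb] at h1)
  show b0 (sk.toFun (emb hS A0))
  rw [skel_emb]; exact key

lemma chi_mem (sk : Skel ar hS) (B : Set (Fm C ar S0 → Prop))
    (L' : Set (Fm C ar S) → Fm C ar S → Prop) (hL' : IsSC L')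
    (hext : ∀ Γ0 A0, scBiv B Γ0 A0 → L' (emb hS '' Γ0) (emb hS A0))
    (Γ : Set (Fm C ar S)) :
    (fun A => L' Γ A) ∈ meetCl (extBiv sk B) := by
  obtain ⟨hrefl, hmono, hcut, hsubst⟩ := hL'
  refine ⟨{b' | b' ∈ extBiv sk B ∧ ∀ B', L' Γ B' → b' B'},
    fun b' hb' => hb'.1, ?_⟩
  funext A; apply propext
  constructor
  · intro h b' hb'; exact hb'.2 A h
  · intro h
    by_contra hnA
    by_cases hs : scBiv B (sk.toFun '' {B' | L' Γ B'}) (sk.toFun A)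
    · have h1 := hext _ _ hs
      have h2 := hsubst (fun n => skInv sk (.var n)) _ _ h1
      have e1 : subst (fun n => skInv sk (.var n)) ''
          (emb hS '' (sk.toFun '' {B' | L' Γ B'})) = {B' | L' Γ B'} := by
        ext X; constructor
        · rintro ⟨_, ⟨_, ⟨Y, hY, rfl⟩, rfl⟩, rfl⟩
          rw [subst_skInv_emb, skInv_left]; exact hY
        · intro hX
          exact ⟨_, ⟨_, ⟨X, hX, rfl⟩, rfl⟩, by rw [subst_skInv_emb, skInv_left]⟩
      have e2 : subst (fun n => skInv sk (.var n)) (emb hS (sk.toFun A)) = A := by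
        rw [subst_skInv_emb, skInv_left]
      rw [e1, e2] at h2
      have h3 : L' (Γ ∪ {B' | L' Γ B'}) A :=
        hmono _ _ _ Set.subset_union_right h2
      exact hnA (hcut Γ {B' | L' Γ B'} A (fun B' hB' => hB') h3)
    · unfold scBiv at hs
      push_neg at hs
      obtain ⟨b0, hb0, hT, hnb⟩ := hs
      exact hnb (h _ ⟨⟨b0, hb0, rfl⟩, fun B' hB' => hT _ ⟨B', hB', rfl⟩⟩)

end Aux

/-- the combination of the single-conclusion logics of `B₁`, `B₂`
is the logic of `(B₁^{Σ₁∪Σ₂})^∩ ∩ (B₂^{Σ₁∪Σ₂})^∩`. -/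
theorem statement8 {C : Type} {ar : C → ℕ} {S1 S2 : Set C}
    (B1 : Set (Fm C ar S1 → Prop)) (B2 : Set (Fm C ar S2 → Prop))
    (hB1 : SubstClosed B1) (hB2 : SubstClosed B2)
    (sk1 : Skel ar (unionLeft : S1 ⊆ S1 ∪ S2))
    (sk2 : Skel ar (unionRight : S2 ⊆ S1 ∪ S2)) :
    IsCombSC (scBiv B1) (scBiv B2)
      (scBiv (meetCl (extBiv sk1 B1) ∩ meetCl (extBiv sk2 B2))) := by
  have hM1 := substClosed_meetCl _ (substClosed_extBiv sk1 B1 hB1)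
  have hM2 := substClosed_meetCl _ (substClosed_extBiv sk2 B2 hB2)
  have hM : SubstClosed (meetCl (extBiv sk1 B1) ∩ meetCl (extBiv sk2 B2)) :=
    fun b hb σ => ⟨hM1 b hb.1 σ, hM2 b hb.2 σ⟩
  refine ⟨isSC_scBiv _ hM, ?_, ?_⟩
  · rintro Γ A (⟨Γ0, A0, h, rfl, rfl⟩ | ⟨Γ0, A0, h, rfl, rfl⟩)
    · intro b hb hΓ; exact base_sub sk1 B1 hB1 Γ0 A0 h b hb.1 hΓ
    · intro b hb hΓ; exact base_sub sk2 B2 hB2 Γ0 A0 h b hb.2 hΓ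
  · intro L' hL' hbase Γ A h
    have c1 := chi_mem sk1 B1 L' hL'
      (fun Γ0 A0 h0 => hbase _ _ (Or.inl ⟨Γ0, A0, h0, rfl, rfl⟩)) Γ
    have c2 := chi_mem sk2 B2 L' hL'
      (fun Γ0 A0 h0 => hbase _ _ (Or.inr ⟨Γ0, A0, h0, rfl, rfl⟩)) Γ
    exact h _ ⟨c1, c2⟩ fun B' hB' => hL'.1 Γ B' hB'

end Paper
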